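/- arXiv:2510.06432 — 3 statements merged into one kernel-verified Lean document; each statement's English description precedes it below -/
import Mathlib

section
/- Let S ⊆ T_1 be subspaces of F^n and let T_2 be a subspace with T_1 ∩ T_2 ⊆ S. Let x ∈ F^n, x_1 ∈ T_1 + x, and x_2 ∈ T_2 + S + x. Then there exists s ∈ S such that x_1, x_2 ∈ T_1 + (s + x) and x_2 ∈ T_2 + (s + x), and consequently (T_1 ∩ T_2) + (s + x) ⊆ S + x; in particular the coset remainder construction applied to (T_1, T_2, x_1, x_2) yields a coset contained in S + x. -/
/-- let `S ⊆ T₁` be subspaces of `F^n` and `T₂` a subspace with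
`T₁ ⊓ T₂ ⊆ S`. If `x₁ ∈ T₁ + x` and `x₂ ∈ T₂ + S + x`, then there exists
`s ∈ S` with `x₁ ∈ T₁ + (s + x)` and `x₂ ∈ T₂ + (s + x)`, and consequently the
coset `(T₁ ⊓ T₂) + (s + x)` is contained in `S + x`. -/
theorem coset_remainder_superspace {F : Type*} [Field F] {n : ℕ}
    (T₁ T₂ S : Submodule F (Fin n → F))
    (hST₁ : S ≤ T₁) (hInt : T₁ ⊓ T₂ ≤ S)
    (x x₁ x₂ : Fin n → F)
    (hx₁ : x₁ - x ∈ T₁) (hx₂ : x₂ - x ∈ T₂ ⊔ S) :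
    ∃ s ∈ S,
      x₁ - (s + x) ∈ T₁ ∧ x₂ - (s + x) ∈ T₂ ∧
      ∀ v : Fin n → F, v - (s + x) ∈ T₁ ⊓ T₂ → v - x ∈ S := by
  rw [Submodule.mem_sup] at hx₂
  obtain ⟨t, ht, s, hs, hts⟩ := hx₂
  refine ⟨s, hs, ?_, ?_, ?_⟩
  · have : x₁ - (s + x) = (x₁ - x) - s := by ring
    rw [this]
    exact T₁.sub_mem hx₁ (hST₁ hs)
  · have : x₂ - (s + x) = (x₂ - x) - s := by ring
    rw [this, ← hts]
    simpa using ht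
  · intro v hv
    have : v - x = (v - (s + x)) + s := by ring
    rw [this]
    exact S.add_mem (hInt hv) hs
end

section
/- Let S ⊆ T ⊆ F_2^n be subspaces, x, z ∈ F_2^n, and x', z' ∈ F_2^n. Define the coset state |S_{x,z}⟩ = (1/√|S|) Σ_{s ∈ S} (-1)^{s·z} |s + x⟩ and |T_{x',z'}⟩ = (1/√|T|) Σ_{t ∈ T} (-1)^{t·z'} |t + x'⟩. Then applying a coordinatewise CNOT from the first register to the second (mapping |a⟩|b⟩ to |a⟩|b + a⟩) to the state |S_{x,z}⟩ ⊗ |T_{x',z'}⟩ yields the state |S_{x, z-z'}⟩ ⊗ |T_{x+x', z'}⟩. -/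
open scoped Classical

/-- The phase `(-1)^b` for `b ∈ F_2`. -/
noncomputable def chi (b : ZMod 2) : ℂ := if b = 0 then 1 else -1

/-- The `F_2` inner product. -/
def ip {n : ℕ} (a b : Fin n → ZMod 2) : ZMod 2 := ∑ i, a i * b i

/-- The coset state `|S_{x,z}⟩ = (1/√|S|) Σ_{s ∈ S} (-1)^{⟨s,z⟩} |s + x⟩`,
as an amplitude function on `F_2^n`. -/
noncomputable def cosetState {n : ℕ} (S : Submodule (ZMod 2) (Fin n → ZMod 2))
    (x z : Fin n → ZMod 2) : (Fin n → ZMod 2) → ℂ :=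
  fun v => if v - x ∈ S then chi (ip (v - x) z) / Real.sqrt (Nat.card S) else 0

/-! The proof is the change of variables `t' = t + s`: on the support of `|S_{x,z}⟩` the
first register is `a = x + s` with `s ∈ S ⊆ T`, and shifting the centre of a `T`-coset state by
`s ∈ T` only changes it by the global phase `(-1)^⟨s,z'⟩`. That phase is exactly the change
`z ↦ z - z'` of the `S`-coset state at `a`. -/

theorem chi_add (u v : ZMod 2) : chi (u + v) = chi u * chi v := by
  have zero_or_one : ∀ w : ZMod 2, w = 0 ∨ w = 1 := by decide
  rcases zero_or_one u with rfl | rfl <;> rcases zero_or_one v with rfl | rfl <;>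
    simp [chi, CharTwo.add_self_eq_zero]

theorem chi_sub (u v : ZMod 2) : chi (u - v) = chi u * chi v := by
  rw [CharTwo.sub_eq_add, chi_add]

theorem ip_eq_dotProduct {n : ℕ} (a b : Fin n → ZMod 2) : ip a b = a ⬝ᵥ b := rfl

section cosetState

variable {n : ℕ} (S : Submodule (ZMod 2) (Fin n → ZMod 2)) (x z : Fin n → ZMod 2)

theorem cosetState_sub_apply (u v : Fin n → ZMod 2) :
    cosetState S x z (v - u) = cosetState S (x + u) z v := by
  simp only [cosetState, sub_sub, add_comm u x]

theorem cosetState_add_center_of_mem {s : Fin n → ZMod 2} (hs : s ∈ S) (v : Fin n → ZMod 2) :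
    cosetState S (x + s) z v = chi (ip s z) * cosetState S x z v := by
  have hv : v - (x + s) = (v - x) - s := by abel
  simp only [cosetState, hv, S.sub_mem_iff_left hs, ip_eq_dotProduct, sub_dotProduct, chi_sub]
  split_ifs <;> ring

theorem cosetState_sub_phase (w v : Fin n → ZMod 2) :
    cosetState S x (z - w) v = chi (ip (v - x) w) * cosetState S x z v := by
  simp only [cosetState, ip_eq_dotProduct, dotProduct_sub, chi_sub]
  split_ifs <;> ring

end cosetState

/-- for subspaces `S ⊆ T ⊆ F_2^n`, applying a coordinatewise CNOT
(`|a⟩|b⟩ ↦ |a⟩|b + a⟩`) to `|S_{x,z}⟩ ⊗ |T_{x',z'}⟩` yields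
`|S_{x,z-z'}⟩ ⊗ |T_{x+x',z'}⟩`.  Amplitude-wise: the amplitude of `|a⟩|b⟩` in
the image state is the amplitude of `|a⟩|b - a⟩` in the input state. -/
theorem cnot_cosetState {n : ℕ} (S T : Submodule (ZMod 2) (Fin n → ZMod 2))
    (hST : S ≤ T) (x z x' z' : Fin n → ZMod 2) :
    ∀ a b : Fin n → ZMod 2,
      cosetState S x z a * cosetState T x' z' (b - a) =
        cosetState S x (z - z') a * cosetState T (x + x') z' b := by
  intro a b
  by_cases hs : a - x ∈ S
  · have hcenter : x' + a = (x + x') + (a - x) := by abel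
    rw [cosetState_sub_apply, hcenter, cosetState_add_center_of_mem T _ _ (hST hs),
      cosetState_sub_phase]
    ring
  · simp [cosetState, hs]
end

section
/- Let R ⊆ S ⊆ F_2^λ with dim(R) = λ/6, dim(S) = 2λ/6, and let T be a uniformly random superspace of S of dimension 3λ/6 and T_R a uniformly random superspace of R of dimension 3λ/6 (sampled independently given R). Then Pr[T ∩ T_R = R] ≥ 1 - 2^{-λ/6 + 1}. -/
/-!
Fix `T ⊇ S` and a complement `C` of `R`. By the modular law `T ⊓ T_R = R` unless `T_R` meets the
`2m`-dimensional space `C ⊓ T` outside `0`, so a union bound over the nonzero `a ∈ C ⊓ T` reduces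
the theorem to bounding the fraction of `d`-dimensional superspaces of `R` that contain a fixed
`a ∉ R`. An automorphism of `V` carrying `R ⊔ K ∙ a` to `R ⊔ K ∙ b`, for any other `b ∉ R`,
shows that this fraction does not depend on `a`, and double counting the pairs `(T_R, a)` with
`a ∈ T_R \ R` computes it as `(q^d - q^r) / (q^n - q^r) ≤ q^(d - n)`. Altogether at most a
`2^(2m) · 2^(3m - 6m) = 2^(-m)` fraction of the pairs is bad.
-/

open Module Finset

namespace Submodule

variable {K V : Type*} [Field K] [AddCommGroup V] [Module K V]

theorem exists_linearEquiv_map_eq [FiniteDimensional K V] {W W' : Submodule K V}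
    (h : finrank K W = finrank K W') : ∃ g : V ≃ₗ[K] V, W.map (g : V →ₗ[K] V) = W' := by
  obtain ⟨g, hg⟩ := exists_linearEquiv_restrict_eq (LinearEquiv.ofFinrankEq W W' h)
  refine ⟨g, le_antisymm ?_ fun y hy => ?_⟩
  · rintro _ ⟨x, hx, rfl⟩
    simp [← hg ⟨x, hx⟩]
  · refine ⟨_, ((LinearEquiv.ofFinrankEq W W' h).symm ⟨y, hy⟩).2, ?_⟩
    simp [← hg]

theorem exists_le_finrank_eq [FiniteDimensional K V] (U : Submodule K V) {d : ℕ}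
    (hUd : finrank K U ≤ d) (hd : d ≤ finrank K V) : ∃ T, U ≤ T ∧ finrank K T = d := by
  induction d, hUd using Nat.le_induction with
  | base => exact ⟨U, le_rfl, rfl⟩
  | succ d _ ih =>
    obtain ⟨T, hUT, hT⟩ := ih (by omega)
    obtain ⟨v, -, hv⟩ :=
      SetLike.exists_of_lt (lt_top_of_finrank_lt_finrank (by omega : finrank K T < finrank K V))
    exact ⟨T ⊔ K ∙ v, hUT.trans le_sup_left, by rw [finrank_sup_span_singleton hv, hT]⟩

theorem finrank_inf_add_finrank_of_isCompl [FiniteDimensional K V] {R C T : Submodule K V}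
    (hC : IsCompl R C) (hRT : R ≤ T) : finrank K ↥(C ⊓ T) + finrank K R = finrank K T := by
  have h := finrank_sup_add_finrank_inf_eq R (C ⊓ T)
  rw [← sup_inf_assoc_of_le C hRT, hC.sup_eq_top, top_inf_eq,
    (hC.disjoint.mono_right inf_le_left).eq_bot, finrank_bot] at h
  omega

end Submodule

theorem IsCompl.inf_eq_of_disjoint_inf {α : Type*} [Lattice α] [BoundedOrder α]
    [IsModularLattice α] {R C T T' : α} (hC : IsCompl R C) (hRT : R ≤ T) (hRT' : R ≤ T')
    (h : Disjoint (C ⊓ T) T') : T ⊓ T' = R := by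
  have hT : R ⊔ C ⊓ T = T := by rw [← sup_inf_assoc_of_le C hRT, hC.sup_eq_top, top_inf_eq]
  rw [← hT, sup_inf_assoc_of_le _ hRT', h.eq_bot, sup_bot_eq]

namespace Submodule

open scoped Classical

section Superspaces

variable {K V : Type*} [Field K] [AddCommGroup V] [Module K V] [Fintype V]

noncomputable def superspaces (U : Submodule K V) (d : ℕ) : Finset (Submodule K V) :=
  (Set.toFinite {T : Submodule K V | U ≤ T ∧ finrank K T = d}).toFinset

theorem mem_superspaces {U T : Submodule K V} {d : ℕ} :
    T ∈ superspaces U d ↔ U ≤ T ∧ finrank K T = d :=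
  Set.Finite.mem_toFinset _

theorem natCard_superspaces (U : Submodule K V) (d : ℕ) :
    Nat.card {T : Submodule K V // U ≤ T ∧ finrank K T = d} = #(superspaces U d) := by
  rw [← Nat.card_eq_finsetCard]
  exact Nat.card_congr (Equiv.subtypeEquivRight fun _ => mem_superspaces.symm)

theorem natCard_subtype_superspaces (U : Submodule K V) (d : ℕ) (P : Submodule K V → Prop) :
    Nat.card {T : {T : Submodule K V // U ≤ T ∧ finrank K T = d} // P T} =
      #{T ∈ superspaces U d | P T} := by
  rw [← Nat.card_eq_finsetCard]
  refine Nat.card_congr ((Equiv.subtypeSubtypeEquivSubtypeInter _ P).trans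
    (Equiv.subtypeEquivRight fun _ => ?_))
  rw [mem_filter, mem_superspaces]

theorem natCard_superspaces_prod (U U' : Submodule K V) (d d' : ℕ)
    (P : Submodule K V → Submodule K V → Prop) :
    Nat.card {p : {T : Submodule K V // U ≤ T ∧ finrank K T = d} ×
        {T : Submodule K V // U' ≤ T ∧ finrank K T = d'} // P p.1 p.2} =
      ∑ T ∈ superspaces U d, #{T' ∈ superspaces U' d' | P T T'} := by
  let _ := Fintype.ofFinite {T : Submodule K V // U ≤ T ∧ finrank K T = d}
  rw [Nat.card_congr (Equiv.subtypeProdEquivSigmaSubtype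
      fun (T : {T : Submodule K V // U ≤ T ∧ finrank K T = d})
        (T' : {T : Submodule K V // U' ≤ T ∧ finrank K T = d'}) => P T.1 T'.1), Nat.card_sigma]
  simp only [natCard_subtype_superspaces]
  exact (sum_subtype (p := fun T => U ≤ T ∧ finrank K T = d) _ (fun _ => mem_superspaces)
    fun T => #{T' ∈ superspaces U' d' | P T T'}).symm

theorem filter_mem_superspaces (U : Submodule K V) (v : V) (d : ℕ) :
    {T ∈ superspaces U d | v ∈ T} = superspaces (U ⊔ K ∙ v) d := by
  ext T
  simp only [mem_filter, mem_superspaces, sup_le_iff, span_singleton_le_iff_mem]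
  tauto

theorem card_superspaces_eq_of_finrank_eq {U U' : Submodule K V}
    (h : finrank K U = finrank K U') (d : ℕ) :
    #(superspaces U d) = #(superspaces U' d) := by
  obtain ⟨g, rfl⟩ := exists_linearEquiv_map_eq h
  refine card_equiv (orderIsoMapComap g).toEquiv fun T => ?_
  simp [mem_superspaces, map_le_map_iff_of_injective g.injective, LinearEquiv.finrank_map_eq]

theorem card_filter_mem_superspaces_eq {U : Submodule K V} {v w : V} (hv : v ∉ U) (hw : w ∉ U)
    (d : ℕ) : #{T ∈ superspaces U d | v ∈ T} = #{T ∈ superspaces U d | w ∈ T} := by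
  rw [filter_mem_superspaces, filter_mem_superspaces]
  exact card_superspaces_eq_of_finrank_eq
    (by rw [finrank_sup_span_singleton hv, finrank_sup_span_singleton hw]) d

end Superspaces

variable {K V : Type*} [Field K] [Fintype K] [AddCommGroup V] [Module K V] [Fintype V]

local notation "q" => Fintype.card K

theorem card_filter_mem (B : Submodule K V) : #{x : V | x ∈ B} = q ^ finrank K B := by
  rw [← Fintype.card_subtype]
  exact card_eq_pow_finrank

theorem card_filter_notMem_and_mem_add {U B : Submodule K V} (hUB : U ≤ B) :
    #{x : V | x ∉ U ∧ x ∈ B} + q ^ finrank K U = q ^ finrank K B := by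
  have hsub : ({x : V | x ∈ U} : Finset V) ⊆ ({x : V | x ∈ B} : Finset V) := fun x => by
    simpa using @hUB x
  rw [← card_filter_mem, ← card_filter_mem, ← card_sdiff_add_card_eq_card hsub]
  congr 2
  ext x
  simp [and_comm]

theorem card_superspaces_mul_eq {U : Submodule K V} {v : V} (hv : v ∉ U) (d : ℕ) :
    #(superspaces U d) * (q ^ d - q ^ finrank K U) =
      (q ^ finrank K V - q ^ finrank K U) * #{T ∈ superspaces U d | v ∈ T} := by
  have hV := card_filter_notMem_and_mem_add (le_top : U ≤ ⊤)
  rw [finrank_top] at hV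
  have hcompl : #{x : V | x ∉ U} = q ^ finrank K V - q ^ finrank K U := by
    simp only [mem_top, and_true] at hV
    omega
  rw [← hcompl]
  refine card_mul_eq_card_mul (fun T x => x ∈ T) (fun T hT => ?_) fun x hx => ?_
  · rw [mem_superspaces] at hT
    have hT' := card_filter_notMem_and_mem_add hT.1
    rw [hT.2] at hT'
    rw [bipartiteAbove, filter_filter]
    omega
  · exact card_filter_mem_superspaces_eq (by simpa using hx) hv d

theorem card_filter_mem_superspaces_mul_le {U : Submodule K V} {v : V} (hv : v ∉ U) (d : ℕ) :
    #{T ∈ superspaces U d | v ∈ T} * q ^ finrank K V ≤ #(superspaces U d) * q ^ d := by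
  obtain h | ⟨T, hT⟩ := (superspaces U d).eq_empty_or_nonempty
  · simp [h]
  rw [mem_superspaces] at hT
  have hUd : q ^ finrank K U ≤ q ^ d :=
    hT.2 ▸ pow_le_pow_right₀ Fintype.card_pos (finrank_mono hT.1)
  have hdV : q ^ d ≤ q ^ finrank K V := hT.2 ▸ pow_le_pow_right₀ Fintype.card_pos (finrank_le T)
  have hle := Nat.mul_le_mul_right (q ^ finrank K U)
    (card_filter_le (superspaces U d) (v ∈ ·))
  have h := card_superspaces_mul_eq hv d
  zify [hUd, hUd.trans hdV] at h hle ⊢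
  linarith

theorem card_filter_not_disjoint_superspaces_mul_le {U A : Submodule K V} (hUA : Disjoint U A)
    (d : ℕ) : #{T ∈ superspaces U d | ¬Disjoint A T} * q ^ finrank K V ≤
      q ^ (finrank K A + d) * #(superspaces U d) := by
  set nonzero := ({a : V | a ∈ A ∧ a ≠ 0} : Finset V)
  have hcover : {T ∈ superspaces U d | ¬Disjoint A T} ⊆
      nonzero.biUnion fun a => {T ∈ superspaces U d | a ∈ T} := by
    intro T hT
    simp only [mem_filter, disjoint_def, not_forall] at hT
    obtain ⟨hT, a, haA, haT, ha⟩ := hT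
    exact mem_biUnion.2 ⟨a, by simp [nonzero, haA, ha], mem_filter.2 ⟨hT, haT⟩⟩
  have hnonzero : #nonzero ≤ q ^ finrank K A :=
    card_filter_mem A ▸ card_le_card fun x => by simp +contextual [nonzero]
  calc #{T ∈ superspaces U d | ¬Disjoint A T} * q ^ finrank K V
      ≤ ∑ a ∈ nonzero, #{T ∈ superspaces U d | a ∈ T} * q ^ finrank K V := by
        rw [← sum_mul]
        gcongr
        exact (card_le_card hcover).trans card_biUnion_le
    _ ≤ ∑ a ∈ nonzero, #(superspaces U d) * q ^ d := by
        refine sum_le_sum fun a ha => card_filter_mem_superspaces_mul_le (fun haU => ?_) d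
        simp only [nonzero, mem_filter] at ha
        exact ha.2.2 (disjoint_def.1 hUA a haU ha.2.1)
    _ = #nonzero * (#(superspaces U d) * q ^ d) := by rw [sum_const, smul_eq_mul]
    _ ≤ q ^ finrank K A * (#(superspaces U d) * q ^ d) := Nat.mul_le_mul_right _ hnonzero
    _ = q ^ (finrank K A + d) * #(superspaces U d) := by ring

theorem card_filter_inf_ne_superspaces_mul_le {R T : Submodule K V} (hRT : R ≤ T) (d : ℕ) :
    #{T' ∈ superspaces R d | T ⊓ T' ≠ R} * q ^ (finrank K V + finrank K R) ≤
      q ^ (finrank K T + d) * #(superspaces R d) := by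
  obtain ⟨C, hC⟩ := exists_isCompl R
  have hsub : {T' ∈ superspaces R d | T ⊓ T' ≠ R} ⊆
      {T' ∈ superspaces R d | ¬Disjoint (C ⊓ T) T'} := by
    intro T' hT'
    rw [mem_filter, mem_superspaces] at hT' ⊢
    exact ⟨hT'.1, fun h => hT'.2 (hC.inf_eq_of_disjoint_inf hRT hT'.1.1 h)⟩
  calc #{T' ∈ superspaces R d | T ⊓ T' ≠ R} * q ^ (finrank K V + finrank K R)
      ≤ #{T' ∈ superspaces R d | ¬Disjoint (C ⊓ T) T'} * q ^ finrank K V * q ^ finrank K R := by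
        rw [pow_add, ← mul_assoc]
        gcongr
    _ ≤ q ^ (finrank K ↥(C ⊓ T) + d) * #(superspaces R d) * q ^ finrank K R := by
        gcongr ?_ * _
        exact card_filter_not_disjoint_superspaces_mul_le (hC.disjoint.mono_right inf_le_left) d
    _ = q ^ (finrank K T + d) * #(superspaces R d) := by
        rw [← finrank_inf_add_finrank_of_isCompl hC hRT]
        ring

theorem one_sub_zpow_mul_card_superspaces_le {R T : Submodule K V} (hRT : R ≤ T) (d : ℕ) :
    (1 - (q : ℚ) ^ ((finrank K T + d : ℤ) - (finrank K V + finrank K R))) * #(superspaces R d) ≤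
      #{T' ∈ superspaces R d | T ⊓ T' = R} := by
  have hsplit : (#{T' ∈ superspaces R d | T ⊓ T' = R} : ℚ) +
      #{T' ∈ superspaces R d | T ⊓ T' ≠ R} = #(superspaces R d) := by
    exact_mod_cast card_filter_add_card_filter_not (fun T' => T ⊓ T' = R)
  have hbad : (#{T' ∈ superspaces R d | T ⊓ T' ≠ R} : ℚ) * q ^ (finrank K V + finrank K R) ≤
      q ^ (finrank K T + d) * #(superspaces R d) := by
    exact_mod_cast card_filter_inf_ne_superspaces_mul_le hRT d
  have hq : (0 : ℚ) < q := by exact_mod_cast Fintype.card_pos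
  rw [← le_div_iff₀ (by positivity)] at hbad
  rw [zpow_sub₀ hq.ne', ← Nat.cast_add, ← Nat.cast_add, zpow_natCast, zpow_natCast, sub_mul,
    one_mul, div_mul_eq_mul_div]
  linarith

end Submodule

/-- let `R ⊆ S ⊆ F_2^λ` with `dim R = λ/6`, `dim S = 2λ/6`
(`λ = 6m`), let `T` be a uniformly random superspace of `S` of dimension `3λ/6`
and `T_R` an independent uniformly random superspace of `R` of dimension
`3λ/6`.  Then `Pr[T ⊓ T_R = R] ≥ 1 - 2^{-λ/6 + 1}`. -/
theorem random_superspaces_intersect_in_R (m : ℕ)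
    (R S : Submodule (ZMod 2) (Fin (6 * m) → ZMod 2))
    (hRS : R ≤ S)
    (hR : finrank (ZMod 2) R = m)
    (hS : finrank (ZMod 2) S = 2 * m) :
    1 - (2 : ℚ) ^ (-(m : ℤ) + 1) ≤
      (Nat.card {p : {T : Submodule (ZMod 2) (Fin (6 * m) → ZMod 2) //
              S ≤ T ∧ finrank (ZMod 2) T = 3 * m} ×
            {T : Submodule (ZMod 2) (Fin (6 * m) → ZMod 2) //
              R ≤ T ∧ finrank (ZMod 2) T = 3 * m} //
          p.1.1 ⊓ p.2.1 = R} : ℚ) /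
        ((Nat.card {T : Submodule (ZMod 2) (Fin (6 * m) → ZMod 2) //
            S ≤ T ∧ finrank (ZMod 2) T = 3 * m} : ℚ) *
         (Nat.card {T : Submodule (ZMod 2) (Fin (6 * m) → ZMod 2) //
            R ≤ T ∧ finrank (ZMod 2) T = 3 * m} : ℚ)) := by
  classical
  set A := Submodule.superspaces S (3 * m)
  set B := Submodule.superspaces R (3 * m)
  have hdim : 3 * m ≤ finrank (ZMod 2) (Fin (6 * m) → ZMod 2) := by rw [finrank_fin_fun]; omega
  obtain ⟨T₀, hT₀⟩ := S.exists_le_finrank_eq (by omega) hdim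
  obtain ⟨T₀', hT₀'⟩ := R.exists_le_finrank_eq (by omega) hdim
  have hpos : (0 : ℚ) < #A * #B := by
    have := card_pos.2 ⟨T₀, Submodule.mem_superspaces.2 hT₀⟩
    have := card_pos.2 ⟨T₀', Submodule.mem_superspaces.2 hT₀'⟩
    positivity
  have hgood : ∀ T ∈ A, (1 - (2 : ℚ) ^ (-(m : ℤ) + 1)) * #B ≤ #{T' ∈ B | T ⊓ T' = R} := by
    intro T hT
    rw [Submodule.mem_superspaces] at hT
    refine le_trans ?_ (Submodule.one_sub_zpow_mul_card_superspaces_le (hRS.trans hT.1) (3 * m))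
    rw [ZMod.card, finrank_fin_fun, hR, hT.2]
    gcongr
    norm_num
    omega
  rw [Submodule.natCard_superspaces_prod S R (3 * m) (3 * m) fun T T' => T ⊓ T' = R,
    Submodule.natCard_superspaces, Submodule.natCard_superspaces, le_div_iff₀ hpos]
  calc (1 - (2 : ℚ) ^ (-(m : ℤ) + 1)) * (#A * #B)
      = ∑ T ∈ A, (1 - (2 : ℚ) ^ (-(m : ℤ) + 1)) * #B := by rw [sum_const, nsmul_eq_mul]; ring
    _ ≤ _ := by exact_mod_cast sum_le_sum hgood
end
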